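/- For all vectors $p, k, \ell \in \mathbb{R}^d$ and all $s \in [0,1]$, the quantity $D_s(p,k,\ell) := |p+\ell|^s - |p|^s - |p+k+\ell|^s + |p+k|^s$ satisfies $|D_s(p,k,\ell)| \le 2\,|k|^{s/2}\,|\ell|^{s/2}$. -/
import Mathlib

open scoped NNReal

private lemma aux_rpow {x y s : ℝ} (hx : 0 ≤ x) (hxy : x ≤ y)
    (hs0 : 0 ≤ s) (hs1 : s ≤ 1) : y ^ s - x ^ s ≤ (y - x) ^ s := by
  have hd : 0 ≤ y - x := by linarith
  have h := NNReal.rpow_add_le_add_rpow x.toNNReal (y - x).toNNReal hs0 hs1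
  have h3 := NNReal.coe_le_coe.2 h
  push_cast at h3
  rw [Real.coe_toNNReal _ hx, Real.coe_toNNReal _ hd] at h3
  have : x + (y - x) = y := by ring
  rw [this] at h3
  linarith

private lemma aux_abs {x y s : ℝ} (hx : 0 ≤ x) (hy : 0 ≤ y)
    (hs0 : 0 ≤ s) (hs1 : s ≤ 1) : |y ^ s - x ^ s| ≤ |y - x| ^ s := by
  rcases le_total x y with h | h
  · rw [abs_of_nonneg (by linarith : (0:ℝ) ≤ y - x),
      abs_of_nonneg (sub_nonneg.2 (Real.rpow_le_rpow hx h hs0))]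
    exact aux_rpow hx h hs0 hs1
  · rw [abs_sub_comm, abs_sub_comm y x,
      abs_of_nonneg (by linarith : (0:ℝ) ≤ x - y),
      abs_of_nonneg (sub_nonneg.2 (Real.rpow_le_rpow hy h hs0))]
    exact aux_rpow hy h hs0 hs1

private lemma aux_norm {d : ℕ} (a v : EuclideanSpace ℝ (Fin d)) {s : ℝ}
    (hs0 : 0 ≤ s) (hs1 : s ≤ 1) : |‖a + v‖ ^ s - ‖a‖ ^ s| ≤ ‖v‖ ^ s := by
  refine le_trans (aux_abs (norm_nonneg a) (norm_nonneg (a + v)) hs0 hs1) ?_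
  refine Real.rpow_le_rpow (abs_nonneg _) ?_ hs0
  exact (abs_norm_sub_norm_le (a + v) a).trans_eq (by simp)

/-- For all `p, k, ℓ ∈ ℝ^d` and `s ∈ [0,1]`, the quantity
`D_s(p,k,ℓ) = |p+ℓ|^s - |p|^s - |p+k+ℓ|^s + |p+k|^s` satisfies
`|D_s(p,k,ℓ)| ≤ 2 |k|^(s/2) |ℓ|^(s/2)`. -/
theorem abs_D_le {d : ℕ} (p k ℓ : EuclideanSpace ℝ (Fin d)) (s : ℝ)
    (hs : s ∈ Set.Icc (0 : ℝ) 1) :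
    |‖p + ℓ‖ ^ s - ‖p‖ ^ s - ‖p + k + ℓ‖ ^ s + ‖p + k‖ ^ s| ≤
      2 * ‖k‖ ^ (s / 2) * ‖ℓ‖ ^ (s / 2) := by
  obtain ⟨hs0, hs1⟩ := hs
  set D := ‖p + ℓ‖ ^ s - ‖p‖ ^ s - ‖p + k + ℓ‖ ^ s + ‖p + k‖ ^ s with hD
  have hℓbound : |D| ≤ 2 * ‖ℓ‖ ^ s := by
    have h1 := aux_norm p ℓ hs0 hs1
    have h2 := aux_norm (p + k) ℓ hs0 hs1
    calc |D| = |(‖p + ℓ‖ ^ s - ‖p‖ ^ s) - (‖(p+k) + ℓ‖ ^ s - ‖p + k‖ ^ s)| := by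
              rw [hD]; ring_nf
      _ ≤ |‖p + ℓ‖ ^ s - ‖p‖ ^ s| + |‖(p+k) + ℓ‖ ^ s - ‖p + k‖ ^ s| := abs_sub _ _
      _ ≤ 2 * ‖ℓ‖ ^ s := by linarith
  have hkbound : |D| ≤ 2 * ‖k‖ ^ s := by
    have h1 := aux_norm p k hs0 hs1
    have h2 := aux_norm (p + ℓ) k hs0 hs1
    have he : p + k + ℓ = (p + ℓ) + k := by abel
    calc |D| = |(‖p + k‖ ^ s - ‖p‖ ^ s) - (‖(p+ℓ) + k‖ ^ s - ‖p + ℓ‖ ^ s)| := by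
              rw [hD, he]; ring_nf
      _ ≤ |‖p + k‖ ^ s - ‖p‖ ^ s| + |‖(p+ℓ) + k‖ ^ s - ‖p + ℓ‖ ^ s| := abs_sub _ _
      _ ≤ 2 * ‖k‖ ^ s := by linarith
  have hks : 0 ≤ ‖k‖ ^ (s / 2) := Real.rpow_nonneg (norm_nonneg k) _
  have hls : 0 ≤ ‖ℓ‖ ^ (s / 2) := Real.rpow_nonneg (norm_nonneg ℓ) _
  have hk2 : (‖k‖ ^ (s / 2)) ^ 2 = ‖k‖ ^ s := by
    rw [← Real.rpow_natCast (‖k‖ ^ (s/2)) 2, ← Real.rpow_mul (norm_nonneg k)]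
    norm_num
  have hl2 : (‖ℓ‖ ^ (s / 2)) ^ 2 = ‖ℓ‖ ^ s := by
    rw [← Real.rpow_natCast (‖ℓ‖ ^ (s/2)) 2, ← Real.rpow_mul (norm_nonneg ℓ)]
    norm_num
  have hsq : |D| ^ 2 ≤ (2 * ‖k‖ ^ (s/2) * ‖ℓ‖ ^ (s/2)) ^ 2 := by
    have : |D| * |D| ≤ (2 * ‖k‖ ^ s) * (2 * ‖ℓ‖ ^ s) :=
      mul_le_mul hkbound hℓbound (abs_nonneg D) (by positivity)
    nlinarith [hk2, hl2]
  exact (pow_le_pow_iff_left₀ (abs_nonneg D) (by positivity) two_ne_zero).mp hsq
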